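/- Let G be a graph on n vertices with locally fair fractional orientation g, let v be a vertex with g(v) = ρ* > 0, let 0 < ε ≤ 1, and let V_j denote the set of vertices reachable from v by directed paths of length at most j (along edges with positive orientation weight). If the density of the induced subgraph G[V_i] is less than (1−ε)ρ* for all i ≤ j, then |V_j| ≥ (1−ε)^{−j}. -/
import Mathlib


open Finset Real

noncomputable section

variable {V : Type*}

/-- The out-degree of `u` in a fractional orientation `o`. -/
def outdeg [Fintype V] (o : V → V → ℝ) (u : V) : ℝ := ∑ x : V, o u x

/-- `o` is a fractional orientation of the weighted graph `(G, w)`: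
nonnegative values on directed edge-halves, supported on edges, summing to the edge weight. -/
def IsOrientation [Fintype V] (G : SimpleGraph V) (w : V → V → ℝ) (o : V → V → ℝ) : Prop :=
  (∀ u v, 0 ≤ o u v) ∧ (∀ u v, ¬ G.Adj u v → o u v = 0) ∧
    (∀ u v, G.Adj u v → o u v + o v u = w u v)

/-- A fractional orientation is locally fair if positive weight on `u → v`
implies `g(u) ≤ g(v)`. -/
def LocallyFair [Fintype V] (o : V → V → ℝ) : Prop :=
  ∀ u v, 0 < o u v → outdeg o u ≤ outdeg o v

/-- A fractional orientation is `η`-fair if positive weight on `u → v`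
implies `g(u) ≤ (1+η)·g(v)`. -/
def EtaFair [Fintype V] (η : ℝ) (o : V → V → ℝ) : Prop :=
  ∀ u v, 0 < o u v → outdeg o u ≤ (1 + η) * outdeg o v

/-- Total weight of edges of `G` inside the vertex set `S`. -/
def edgeWeight [Fintype V] (G : SimpleGraph V) [DecidableRel G.Adj] (w : V → V → ℝ)
    (S : Finset V) : ℝ :=
  (∑ u ∈ S, ∑ v ∈ S, if G.Adj u v then w u v else 0) / 2

/-- Density of the subgraph induced on `S`. -/
def densityOn [Fintype V] (G : SimpleGraph V) [DecidableRel G.Adj] (w : V → V → ℝ)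
    (S : Finset V) : ℝ :=
  edgeWeight G w S / S.card

/-- `ReachLe o v i u` : `u` is reachable from `v` by a directed path of length at most `i`
along edges with positive orientation weight. -/
def ReachLe [Fintype V] (o : V → V → ℝ) (v : V) : ℕ → V → Prop
  | 0, u => u = v
  | (i+1), u => ReachLe o v i u ∨ ∃ x : V, ReachLe o v i x ∧ 0 < o x u

open Classical in
/-- The set `V_j` of vertices reachable from `v` by directed paths of length at most `j`. -/
noncomputable def Vset [Fintype V] (o : V → V → ℝ) (v : V) (j : ℕ) : Finset V :=
  Finset.univ.filter (ReachLe o v j)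

lemma mem_Vset [Fintype V] {o : V → V → ℝ} {v : V} {i : ℕ} {u : V} :
    u ∈ Vset o v i ↔ ReachLe o v i u := by
  simp [Vset]

lemma v_mem_Vset [Fintype V] (o : V → V → ℝ) (v : V) : ∀ i, v ∈ Vset o v i := by
  intro i
  induction i with
  | zero => exact mem_Vset.mpr rfl
  | succ i ih => exact mem_Vset.mpr (Or.inl (mem_Vset.mp ih))

lemma Vset_subset_succ [Fintype V] (o : V → V → ℝ) (v : V) (i : ℕ) :
    Vset o v i ⊆ Vset o v (i + 1) := by
  intro u hu
  exact mem_Vset.mpr (Or.inl (mem_Vset.mp hu))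

lemma outdeg_ge [Fintype V] {o : V → V → ℝ} (hfair : LocallyFair o) {v : V}
    {ρstar : ℝ} (hv : outdeg o v = ρstar) :
    ∀ i u, ReachLe o v i u → ρstar ≤ outdeg o u := by
  intro i
  induction i with
  | zero => intro u hu; rw [show u = v from hu, hv]
  | succ i ih =>
      intro u hu
      rcases hu with h | ⟨x, hx, hpos⟩
      · exact ih u h
      · exact le_trans (ih x hx) (hfair x u hpos)

lemma edgeWeight_eq [Fintype V] (G : SimpleGraph V) [DecidableRel G.Adj]
    (w o : V → V → ℝ) (ho : IsOrientation G w o) (S : Finset V) :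
    edgeWeight G w S = ∑ u ∈ S, ∑ x ∈ S, o u x := by
  obtain ⟨h0, hz, hs⟩ := ho
  unfold edgeWeight
  rw [div_eq_iff (two_ne_zero)]
  have key : ∀ u x : V, (if G.Adj u x then w u x else 0) = o u x + o x u := by
    intro u x
    by_cases h : G.Adj u x
    · simp [h, (hs u x h)]
    · simp [h, hz u x h, hz x u (fun h' => h h'.symm)]
  simp_rw [key, Finset.sum_add_distrib]
  rw [Finset.sum_comm (s := S) (t := S) (f := fun u x => o x u)]
  ring

lemma key_step [Fintype V] (G : SimpleGraph V) [DecidableRel G.Adj]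
    (w o : V → V → ℝ) (ho : IsOrientation G w o) (hfair : LocallyFair o)
    (v : V) (ρstar : ℝ) (hv : outdeg o v = ρstar) (i : ℕ) :
    ρstar * ((Vset o v i).card : ℝ) ≤ edgeWeight G w (Vset o v (i + 1)) := by
  obtain ⟨h0, hz, hs⟩ := ho
  rw [edgeWeight_eq G w o ⟨h0, hz, hs⟩]
  have houtd : ∀ u ∈ Vset o v i, outdeg o u = ∑ x ∈ Vset o v (i + 1), o u x := by
    intro u hu
    rw [outdeg]
    refine (Finset.sum_subset (Finset.subset_univ _) ?_).symm
    intro x _ hx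
    by_contra hne
    have hpos : 0 < o u x := lt_of_le_of_ne (h0 u x) (Ne.symm hne)
    exact hx (mem_Vset.mpr (Or.inr ⟨u, mem_Vset.mp hu, hpos⟩))
  calc ρstar * ((Vset o v i).card : ℝ)
      = ∑ _u ∈ Vset o v i, ρstar := by
        rw [Finset.sum_const, nsmul_eq_mul, mul_comm]
    _ ≤ ∑ u ∈ Vset o v i, outdeg o u :=
        Finset.sum_le_sum (fun u hu => outdeg_ge hfair hv i u (mem_Vset.mp hu))
    _ = ∑ u ∈ Vset o v i, ∑ x ∈ Vset o v (i + 1), o u x :=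
        Finset.sum_congr rfl houtd
    _ ≤ ∑ u ∈ Vset o v (i + 1), ∑ x ∈ Vset o v (i + 1), o u x := by
        refine Finset.sum_le_sum_of_subset_of_nonneg (Vset_subset_succ o v i) ?_
        intro u _ _
        exact Finset.sum_nonneg (fun x _ => h0 u x)

/-- if the induced density of every `V_i`, `i ≤ j`, is below `(1-ε)ρ*`,
then `|V_j| ≥ (1-ε)^{-j}`. -/
theorem reachable_set_growth [Fintype V] (G : SimpleGraph V) [DecidableRel G.Adj]
    (w : V → V → ℝ)
    (hwpos : ∀ u v, G.Adj u v → 0 < w u v) (hwsymm : ∀ u v, w u v = w v u)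
    (o : V → V → ℝ) (ho : IsOrientation G w o) (hfair : LocallyFair o)
    (v : V) (ρstar : ℝ) (hv : outdeg o v = ρstar) (hρ : 0 < ρstar)
    (ε : ℝ) (hε : 0 < ε) (hε1 : ε ≤ 1) (j : ℕ)
    (hdens : ∀ i ≤ j, densityOn G w (Vset o v i) < (1 - ε) * ρstar) :
    ((1 - ε)⁻¹) ^ j ≤ ((Vset o v j).card : ℝ) := by
  suffices h : ∀ i, i ≤ j → ((1 - ε)⁻¹) ^ i ≤ ((Vset o v i).card : ℝ) from h j le_rfl
  intro i
  induction i with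
  | zero =>
      intro _
      have : 1 ≤ (Vset o v 0).card := Finset.card_pos.mpr ⟨v, v_mem_Vset o v 0⟩
      simpa using (by exact_mod_cast this : (1 : ℝ) ≤ ((Vset o v 0).card : ℝ))
  | succ i ih =>
      intro hij
      have hi := ih (le_trans (Nat.le_succ i) hij)
      have hcardpos : 0 < ((Vset o v (i + 1)).card : ℝ) := by
        have := Finset.card_pos.mpr ⟨v, v_mem_Vset o v (i + 1)⟩
        exact_mod_cast this
      have hd := hdens (i + 1) hij
      rw [densityOn] at hd
      have hEW : edgeWeight G w (Vset o v (i + 1)) <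
          (1 - ε) * ρstar * ((Vset o v (i + 1)).card : ℝ) :=
        (div_lt_iff₀ hcardpos).mp hd
      have hkey := key_step G w o ho hfair v ρstar hv i
      have hmain : ρstar * ((Vset o v i).card : ℝ) <
          (1 - ε) * ρstar * ((Vset o v (i + 1)).card : ℝ) := lt_of_le_of_lt hkey hEW
      have hcards : ((Vset o v i).card : ℝ) < (1 - ε) * ((Vset o v (i + 1)).card : ℝ) := by
        nlinarith
      by_cases h1 : (1 : ℝ) - ε = 0
      · exfalso
        rw [h1, zero_mul] at hcards
        have : (0 : ℝ) ≤ ((Vset o v i).card : ℝ) := Nat.cast_nonneg _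
        linarith
      · have h1pos : 0 < 1 - ε := lt_of_le_of_ne (by linarith) (Ne.symm h1)
        rw [pow_succ]
        have h2 : ((1 - ε)⁻¹) ^ i * (1 - ε)⁻¹ ≤ ((Vset o v i).card : ℝ) * (1 - ε)⁻¹ :=
          mul_le_mul_of_nonneg_right hi (inv_nonneg.mpr (le_of_lt h1pos))
        refine le_trans h2 ?_
        rw [← div_eq_mul_inv, div_le_iff₀ h1pos]
        nlinarith
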